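/- arXiv:1409.6072 — 3 statements merged into one kernel-verified Lean document; each statement's English description precedes it below -/
import Mathlib

section
/- Let n ≥ 2, K a field, S = K[x_1,…,x_n], and I = I(P_n) the edge ideal of the path P_n. Then sdepth(S/I) ≥ ⌈n/3⌉. -/
open MvPolynomial

/-- The edge ideal `I(P_m)` of the path `P_m` on vertices `x_1, …, x_m`
(0-indexed as `X 0, …, X (m-1)`), regarded as an ideal of `S = K[x_1, …, x_n]`:
it is generated by the monomials `X i * X (i+1)` for `i + 2 ≤ m`
(1-indexed: `x_i x_{i+1}` for `1 ≤ i ≤ m - 1`). -/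
noncomputable def pathIdeal (K : Type*) [Field K] (n m : ℕ) :
    Ideal (MvPolynomial (Fin n) K) :=
  Ideal.span {p | ∃ i j : Fin n, (j : ℕ) = (i : ℕ) + 1 ∧ (i : ℕ) + 2 ≤ m ∧ p = X i * X j}

/-- A (combinatorial) Stanley decomposition of `S/I` for a monomial ideal `I` of
`S = K[x_1, …, x_n]`: a finite family of Stanley spaces `u K[Z]`, encoded as pairs
`(u, Z)` of an exponent vector `u` and a set of variables `Z`, such that each
Stanley space consists of monomials not in `I` (so `u K[Z]` is a free
`K[Z]`-module inside `S/I`) and every monomial not in `I` lies in exactly one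
Stanley space (so `S/I` is the direct sum of the Stanley spaces as `ℤⁿ`-graded
`K`-vector spaces). -/
def IsStanleyDecomp {K : Type*} [Field K] {n : ℕ} (I : Ideal (MvPolynomial (Fin n) K))
    (D : Finset ((Fin n →₀ ℕ) × Finset (Fin n))) : Prop :=
  (∀ p ∈ D, ∀ v : Fin n →₀ ℕ, v.support ⊆ p.2 → (monomial (p.1 + v) (1 : K)) ∉ I) ∧
  ∀ a : Fin n →₀ ℕ, (monomial a (1 : K)) ∉ I →
    ∃! p : (Fin n →₀ ℕ) × Finset (Fin n), p ∈ D ∧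
      ∃ v : Fin n →₀ ℕ, v.support ⊆ p.2 ∧ a = p.1 + v

/-- The Stanley depth `sdepth (S/I)` of the quotient by a monomial ideal `I`:
the largest `s` such that some Stanley decomposition of `S/I` has all its
Stanley spaces of dimension `|Z| ≥ s`. -/
noncomputable def sdepth {K : Type*} [Field K] {n : ℕ}
    (I : Ideal (MvPolynomial (Fin n) K)) : ℕ :=
  sSup {s : ℕ | ∃ D, IsStanleyDecomp I D ∧ ∀ p ∈ D, s ≤ p.2.card}

/-! Sort the monomials of `K[x_1, …, x_m]` outside `I(P_m)` by whether `x_{m-1}` divides them.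
Those it does not divide are the monomials of `K[x_1, …, x_{m-2}]` outside `I(P_{m-2})` times
powers of `x_m`; those it divides avoid `x_{m-2}` and `x_m`, so they are the monomials of
`K[x_1, …, x_{m-3}]` outside `I(P_{m-3})` times `x_{m-1} K[x_{m-1}]`. A Stanley decomposition
for `P_m` is thus assembled from ones for `P_{m-2}` and `P_{m-3}` by adding one variable to each
Stanley space, so the least dimension `d_m` of a space satisfies `d_m ≥ min(d_{m-2}, d_{m-3}) + 1`,
whence `d_m ≥ ⌈m/3⌉`. -/

open Finset

section IsStanleyDecompOf

variable {σ : Type*}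

def IsStanleyDecompOf (P : (σ →₀ ℕ) → Prop) (D : Finset ((σ →₀ ℕ) × Finset σ)) : Prop :=
  (∀ p ∈ D, ∀ v : σ →₀ ℕ, v.support ⊆ p.2 → P (p.1 + v)) ∧
  ∀ a, P a → ∃! p, p ∈ D ∧ ∃ v : σ →₀ ℕ, v.support ⊆ p.2 ∧ a = p.1 + v

theorem isStanleyDecompOf_eq_zero : IsStanleyDecompOf (· = (0 : σ →₀ ℕ)) {(0, ∅)} := by
  refine ⟨fun p hp v hv => ?_, fun a ha =>
    ⟨(0, ∅), ⟨mem_singleton_self _, 0, by simp, by simp [ha]⟩, fun q hq => mem_singleton.mp hq.1⟩⟩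
  obtain rfl := mem_singleton.mp hp
  simpa using hv

theorem IsStanleyDecompOf.congr {P Q : (σ →₀ ℕ) → Prop} {D : Finset ((σ →₀ ℕ) × Finset σ)}
    (hD : IsStanleyDecompOf P D) (hPQ : ∀ a, P a ↔ Q a) : IsStanleyDecompOf Q D := by
  rwa [← funext fun a => propext (hPQ a)]

variable {P Q : (σ →₀ ℕ) → Prop} {D E : Finset ((σ →₀ ℕ) × Finset σ)}

theorem IsStanleyDecompOf.apply_eq_zero_and_notMem (hD : IsStanleyDecompOf P D) {j : σ}
    (hPj : ∀ a, P a → a j = 0) {p : (σ →₀ ℕ) × Finset σ} (hp : p ∈ D) :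
    p.1 j = 0 ∧ j ∉ p.2 := by
  refine ⟨by simpa using hPj _ (hD.1 p hp 0 (by simp)), fun hj => ?_⟩
  have := hPj _ (hD.1 p hp (Finsupp.single j 1) (by simpa using hj))
  simp at this

theorem Finsupp.erase_add_single_add {u : σ →₀ ℕ} {j : σ} (hu : u j = 0) (e : ℕ) (v : σ →₀ ℕ) :
    (u + Finsupp.single j e + v).erase j = u + v.erase j := by
  rw [Finsupp.erase_add, Finsupp.erase_add, Finsupp.erase_single, add_zero,
    Finsupp.erase_of_notMem_support (by simpa using hu)]

theorem Finsupp.single_one_add_single_one_le_iff {i j : σ} (hij : i ≠ j)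
    {a : σ →₀ ℕ} : Finsupp.single i 1 + Finsupp.single j 1 ≤ a ↔ a i ≠ 0 ∧ a j ≠ 0 := by
  classical
  constructor
  · intro h
    have hi := h i
    have hj := h j
    simp [hij, hij.symm] at hi hj
    omega
  · rintro ⟨hi, hj⟩ k
    simp only [Finsupp.add_apply, Finsupp.single_apply]
    split_ifs <;> subst_vars <;> first | omega | exact absurd rfl hij

variable [DecidableEq σ]

theorem IsStanleyDecompOf.existsUnique_union_left (hD : IsStanleyDecompOf P D)
    (hE : IsStanleyDecompOf Q E) (hPQ : ∀ a, P a → ¬ Q a) {a : σ →₀ ℕ} (ha : P a) :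
    ∃! p, p ∈ D ∪ E ∧ ∃ v : σ →₀ ℕ, v.support ⊆ p.2 ∧ a = p.1 + v := by
  obtain ⟨p, ⟨hp, hpa⟩, huniq⟩ := hD.2 a ha
  refine ⟨p, ⟨mem_union_left _ hp, hpa⟩, fun q ⟨hq, hqa⟩ => ?_⟩
  rcases mem_union.mp hq with hq | hq
  · exact huniq q ⟨hq, hqa⟩
  · obtain ⟨v, hv, rfl⟩ := hqa
    exact absurd (hE.1 q hq v hv) (hPQ _ ha)

theorem IsStanleyDecompOf.union (hD : IsStanleyDecompOf P D) (hE : IsStanleyDecompOf Q E)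
    (hPQ : ∀ a, P a → ¬ Q a) : IsStanleyDecompOf (fun a => P a ∨ Q a) (D ∪ E) := by
  refine ⟨fun p hp v hv => ?_, fun a ha => ?_⟩
  · rcases mem_union.mp hp with hp | hp
    exacts [Or.inl (hD.1 p hp v hv), Or.inr (hE.1 p hp v hv)]
  · rcases ha with ha | ha
    · exact hD.existsUnique_union_left hE hPQ ha
    · rw [union_comm]
      exact hE.existsUnique_union_left hD (fun a hQ hP => hPQ a hP hQ) ha

theorem IsStanleyDecompOf.image_add_single_insert (hD : IsStanleyDecompOf P D) {j : σ}
    (hPj : ∀ a, P a → a j = 0) (e : ℕ) :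
    IsStanleyDecompOf (fun a => e ≤ a j ∧ P (a.erase j))
      (D.image fun p => (p.1 + Finsupp.single j e, insert j p.2)) := by
  refine ⟨fun q hq v hv => ?_, fun a ⟨hea, ha⟩ => ?_⟩
  · obtain ⟨p, hp, rfl⟩ := mem_image.mp hq
    have hpj := (hD.apply_eq_zero_and_notMem hPj hp).1
    refine ⟨by simp only [Finsupp.add_apply, Finsupp.single_eq_same]; omega, ?_⟩
    rw [Finsupp.erase_add_single_add hpj]
    exact hD.1 p hp _ (by rw [Finsupp.support_erase, ← subset_insert_iff]; exact hv)
  · obtain ⟨p, ⟨hp, w, hw, hpw⟩, huniq⟩ := hD.2 _ ha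
    refine ⟨(p.1 + Finsupp.single j e, insert j p.2),
      ⟨mem_image_of_mem _ hp, w + Finsupp.single j (a j - e), ?_, ?_⟩, ?_⟩
    · refine Finsupp.support_add.trans (union_subset (hw.trans (subset_insert _ _)) ?_)
      exact Finsupp.support_single_subset.trans (by simp)
    · have hsplit : Finsupp.single j (a j) = Finsupp.single j e + Finsupp.single j (a j - e) := by
        rw [← Finsupp.single_add, Nat.add_sub_cancel' hea]
      calc a = a.erase j + Finsupp.single j (a j) := (Finsupp.erase_add_single j a).symm
        _ = _ := by rw [hpw, hsplit]; dsimp only; abel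
    · rintro q ⟨hq, v, hv, rfl⟩
      obtain ⟨p', hp', rfl⟩ := mem_image.mp hq
      have hp'j := (hD.apply_eq_zero_and_notMem hPj hp').1
      obtain rfl : p' = p := huniq p' ⟨hp', v.erase j,
        by rw [Finsupp.support_erase, ← subset_insert_iff]; exact hv,
        Finsupp.erase_add_single_add hp'j e v⟩
      rfl

theorem IsStanleyDecompOf.le_card_image_add_single_insert (hD : IsStanleyDecompOf P D) {j : σ}
    (hPj : ∀ a, P a → a j = 0) (e : ℕ) {s : ℕ} (hs : ∀ p ∈ D, s ≤ p.2.card) :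
    ∀ q ∈ D.image (fun p => (p.1 + Finsupp.single j e, insert j p.2)), s + 1 ≤ q.2.card := by
  intro q hq
  obtain ⟨p, hp, rfl⟩ := mem_image.mp hq
  rw [card_insert_of_notMem (hD.apply_eq_zero_and_notMem hPj hp).2]
  exact Nat.succ_le_succ (hs p hp)

end IsStanleyDecompOf

section PathStandard

variable {n : ℕ}

def IsPathIndep (a : Fin n →₀ ℕ) : Prop :=
  ∀ i j : Fin n, (j : ℕ) = i + 1 → a i = 0 ∨ a j = 0

/-- The exponents of the monomials of `K[x_1, …, x_m]` outside `I(P_m)`. -/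
def IsPathStandard (m : ℕ) (a : Fin n →₀ ℕ) : Prop :=
  (∀ i : Fin n, m ≤ (i : ℕ) → a i = 0) ∧ IsPathIndep a

theorem IsPathIndep.erase {a : Fin n →₀ ℕ} (ha : IsPathIndep a) (k : Fin n) :
    IsPathIndep (a.erase k) := by
  intro i j hij
  simp only [Finsupp.erase_apply]
  split_ifs <;> simp_all [ha i j hij]

theorem isPathStandard_self_iff {a : Fin n →₀ ℕ} : IsPathStandard n a ↔ IsPathIndep a :=
  ⟨And.right, fun ha => ⟨fun i hi => absurd i.isLt (by omega), ha⟩⟩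

theorem IsPathStandard.of_erase {m m' : ℕ} {k : Fin n} {a : Fin n →₀ ℕ}
    (h : IsPathStandard m' (a.erase k)) (hm' : m' ≤ k - 1) (hk : (k : ℕ) < m) :
    IsPathStandard m a := by
  have hval : ∀ i, i ≠ k → a i = a.erase k i := fun i hi => (Finsupp.erase_ne hi).symm
  have hzero : ∀ i : Fin n, i ≠ k → m' ≤ i → a i = 0 := fun i hik hi => by
    rw [hval i hik, h.1 i hi]
  refine ⟨fun i hi => hzero i (by rw [Ne, Fin.ext_iff]; omega) (by omega), fun i j hij => ?_⟩
  by_cases hik : i = k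
  · subst hik
    exact Or.inr (hzero j (by rw [Ne, Fin.ext_iff]; omega) (by omega))
  by_cases hjk : j = k
  · subst hjk
    exact Or.inl (hzero i hik (by omega))
  rw [hval i hik, hval j hjk]
  exact h.2 i j hij

theorem isPathStandard_zero_iff {a : Fin n →₀ ℕ} : IsPathStandard 0 a ↔ a = 0 := by
  refine ⟨fun ha => Finsupp.ext fun i => ha.1 i (Nat.zero_le _), ?_⟩
  rintro rfl
  exact ⟨fun _ _ => rfl, fun _ _ _ => Or.inl rfl⟩

theorem isPathStandard_one_iff {j₀ : Fin n} (h₀ : (j₀ : ℕ) = 0) {a : Fin n →₀ ℕ} :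
    IsPathStandard 1 a ↔ 0 ≤ a j₀ ∧ IsPathStandard 0 (a.erase j₀) := by
  constructor
  · intro ha
    refine ⟨Nat.zero_le _, isPathStandard_zero_iff.mpr (Finsupp.ext fun i => ?_)⟩
    rw [Finsupp.erase_apply]
    split_ifs with hi
    · rfl
    · exact ha.1 i (by rw [Fin.ext_iff] at hi; omega)
  · rintro ⟨-, ha⟩
    exact ha.of_erase (Nat.zero_le _) (by omega)

/-- For `m = 0` the truncation `m - 1 = 0` is harmless: a monomial outside `I(P_2)` divisible by
`x_1` is a power of `x_1`. -/
theorem isPathStandard_add_two_iff {m : ℕ} {j₀ j₁ : Fin n} (h₀ : (j₀ : ℕ) = m)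
    (h₁ : (j₁ : ℕ) = m + 1) {a : Fin n →₀ ℕ} :
    IsPathStandard (m + 2) a ↔
      (0 ≤ a j₁ ∧ IsPathStandard m (a.erase j₁)) ∨
        (1 ≤ a j₀ ∧ IsPathStandard (m - 1) (a.erase j₀)) := by
  constructor
  · intro ⟨hsupp, hind⟩
    by_cases hj₀ : a j₀ = 0
    · refine Or.inl ⟨Nat.zero_le _, fun i hi => ?_, hind.erase j₁⟩
      rw [Finsupp.erase_apply]
      split_ifs with hij
      · rfl
      · rw [Fin.ext_iff] at hij
        obtain rfl | hi : i = j₀ ∨ m + 2 ≤ (i : ℕ) := by rw [Fin.ext_iff]; omega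
        exacts [hj₀, hsupp i hi]
    · refine Or.inr ⟨Nat.one_le_iff_ne_zero.mpr hj₀, fun i hi => ?_, hind.erase j₀⟩
      rw [Finsupp.erase_apply]
      split_ifs with hij
      · rfl
      · rw [Fin.ext_iff] at hij
        obtain hi | hi | hi : (i : ℕ) + 1 = j₀ ∨ i = j₁ ∨ m + 2 ≤ (i : ℕ) := by
          rw [Fin.ext_iff]; omega
        · exact (hind i j₀ hi.symm).resolve_right hj₀
        · exact (hind j₀ i (by omega)).resolve_left hj₀
        · exact hsupp i hi
  · rintro (⟨-, h⟩ | ⟨-, h⟩)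
    exacts [h.of_erase (by omega) (by omega), h.of_erase (by omega) (by omega)]

theorem exists_isStanleyDecompOf_isPathStandard (m : ℕ) (hm : m ≤ n) :
    ∃ D : Finset ((Fin n →₀ ℕ) × Finset (Fin n)),
      IsStanleyDecompOf (IsPathStandard m) D ∧ ∀ p ∈ D, (m + 2) / 3 ≤ p.2.card := by
  induction m using Nat.strong_induction_on with
  | _ m ih =>
  obtain _ | _ | m := m
  · exact ⟨{(0, ∅)}, isStanleyDecompOf_eq_zero.congr fun _ => isPathStandard_zero_iff.symm,
      by simp⟩
  · obtain ⟨D, hD, hD_card⟩ := ih 0 (by omega) (by omega)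
    let j₀ : Fin n := ⟨0, by omega⟩
    have hDj : ∀ a, IsPathStandard 0 a → a j₀ = 0 := fun a ha => ha.1 j₀ le_rfl
    exact ⟨_, (hD.image_add_single_insert hDj 0).congr
      fun _ => (isPathStandard_one_iff rfl).symm, hD.le_card_image_add_single_insert hDj 0 hD_card⟩
  · obtain ⟨D, hD, hD_card⟩ := ih m (by omega) (by omega)
    obtain ⟨E, hE, hE_card⟩ := ih (m - 1) (by omega) (by omega)
    let j₀ : Fin n := ⟨m, by omega⟩
    let j₁ : Fin n := ⟨m + 1, by omega⟩
    have hDj : ∀ a, IsPathStandard m a → a j₁ = 0 := fun a ha => ha.1 j₁ (Nat.le_succ m)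
    have hEj : ∀ a, IsPathStandard (m - 1) a → a j₀ = 0 := fun a ha => ha.1 j₀ (Nat.sub_le m 1)
    have hdisj : ∀ a : Fin n →₀ ℕ, 0 ≤ a j₁ ∧ IsPathStandard m (a.erase j₁) →
        ¬ (1 ≤ a j₀ ∧ IsPathStandard (m - 1) (a.erase j₀)) := by
      rintro a ⟨-, ha⟩ ⟨ha₀, -⟩
      have := ha.1 j₀ le_rfl
      rw [Finsupp.erase_ne (by simp [j₀, j₁, Fin.ext_iff])] at this
      omega
    have hsplit := (hD.image_add_single_insert hDj 0).union (hE.image_add_single_insert hEj 1) hdisj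
    refine ⟨_, hsplit.congr
      fun _ => (isPathStandard_add_two_iff (j₀ := j₀) (j₁ := j₁) rfl rfl).symm, fun p hp => ?_⟩
    rcases mem_union.mp hp with hp | hp
    · have := hD.le_card_image_add_single_insert hDj 0 hD_card p hp
      omega
    · have := hE.le_card_image_add_single_insert hEj 1 hE_card p hp
      omega

end PathStandard

section PathIdeal

variable {K : Type*} [Field K] {n : ℕ}

theorem monomial_mem_pathIdeal_iff {m : ℕ} {a : Fin n →₀ ℕ} :
    monomial a (1 : K) ∈ pathIdeal K n m ↔
      ∃ i j : Fin n, (j : ℕ) = i + 1 ∧ (i : ℕ) + 2 ≤ m ∧ a i ≠ 0 ∧ a j ≠ 0 := by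
  have hgen : {p | ∃ i j : Fin n, (j : ℕ) = i + 1 ∧ (i : ℕ) + 2 ≤ m ∧ p = X i * X j} =
      (fun s => monomial s (1 : K)) '' {s | ∃ i j : Fin n, (j : ℕ) = i + 1 ∧ (i : ℕ) + 2 ≤ m ∧
        s = Finsupp.single i 1 + Finsupp.single j 1} := by
    ext p
    simp [X, monomial_mul, eq_comm, and_assoc]
  rw [pathIdeal, hgen, mem_ideal_span_monomial_image]
  simp only [mem_support_iff, coeff_monomial, ne_eq, ite_eq_right_iff, one_ne_zero, imp_false,
    Decidable.not_not, Set.mem_ofPred_eq, ↓existsAndEq, and_true, forall_eq', and_assoc]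
  refine exists₂_congr fun i j => and_congr_right fun hj => and_congr_right fun _ => ?_
  exact Finsupp.single_one_add_single_one_le_iff fun h => by rw [h] at hj; omega

theorem monomial_notMem_pathIdeal_iff {a : Fin n →₀ ℕ} :
    monomial a (1 : K) ∉ pathIdeal K n n ↔ IsPathIndep a := by
  simp only [monomial_mem_pathIdeal_iff, IsPathIndep, not_exists, not_and, not_not]
  refine forall₂_congr fun i j => forall_congr' fun hj => ?_
  rw [forall_prop_of_true (by omega : (i : ℕ) + 2 ≤ n), imp_iff_not_or, not_not]

theorem pathIdeal_ne_top : pathIdeal K n n ≠ ⊤ := by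
  rw [Ne, Ideal.eq_top_iff_one, one_def, monomial_notMem_pathIdeal_iff]
  exact fun _ _ _ => Or.inl rfl

theorem isStanleyDecomp_iff {I : Ideal (MvPolynomial (Fin n) K)}
    {D : Finset ((Fin n →₀ ℕ) × Finset (Fin n))} :
    IsStanleyDecomp I D ↔ IsStanleyDecompOf (fun a => monomial a (1 : K) ∉ I) D :=
  Iff.rfl

theorem le_sdepth_of_isStanleyDecomp {I : Ideal (MvPolynomial (Fin n) K)} (hI : I ≠ ⊤)
    {D : Finset ((Fin n →₀ ℕ) × Finset (Fin n))} (hD : IsStanleyDecomp I D) {s : ℕ}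
    (hs : ∀ p ∈ D, s ≤ p.2.card) : s ≤ sdepth I := by
  refine le_csSup ⟨n, ?_⟩ ⟨D, hD, hs⟩
  rintro t ⟨D', hD', ht⟩
  have hone : monomial 0 (1 : K) ∉ I := by
    rwa [← one_def, ← Ideal.eq_top_iff_one]
  obtain ⟨p, ⟨hp, -⟩, -⟩ := hD'.2 0 hone
  exact (ht p hp).trans ((card_le_univ _).trans_eq (Fintype.card_fin n))

end PathIdeal

theorem sdepth_pathIdeal_ge_general {K : Type*} [Field K] (n : ℕ) :
    ⌈(n : ℚ) / 3⌉ ≤ (sdepth (pathIdeal K n n) : ℤ) := by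
  obtain ⟨D, hD, hD_card⟩ := exists_isStanleyDecompOf_isPathStandard n le_rfl
  have hStanley : IsStanleyDecomp (pathIdeal K n n) D := isStanleyDecomp_iff.mpr <|
    hD.congr fun a => isPathStandard_self_iff.trans monomial_notMem_pathIdeal_iff.symm
  have hsdepth := le_sdepth_of_isStanleyDecomp pathIdeal_ne_top hStanley hD_card
  rw [Int.ceil_le, div_le_iff₀ (by norm_num : (0 : ℚ) < 3)]
  exact_mod_cast (by omega : n ≤ sdepth (pathIdeal K n n) * 3)

/-- For `n ≥ 2` and `I = I(P_n)` the edge ideal of the path `P_n` in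
`S = K[x_1, …, x_n]`, one has `sdepth (S/I) ≥ ⌈n/3⌉`. -/
theorem sdepth_pathIdeal_ge {K : Type*} [Field K] (n : ℕ) (hn : 2 ≤ n) :
    ⌈(n : ℚ) / 3⌉ ≤ (sdepth (pathIdeal K n n) : ℤ) :=
  sdepth_pathIdeal_ge_general n
end

section
/- Let m ≥ 4, t ≥ 1, K a field, S = K[x_1,…,x_m], and L = I(P_m) the edge ideal of the path P_m. Then ((L^t : x_m), x_{m−1}) = (I(P_{m−2})^t, x_{m−1}), where I(P_{m−2}) is generated by x_1x_2, …, x_{m−3}x_{m−2} in S. -/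
/-!
Every edge of `P_m` not in `P_{m-2}` contains `x_{m-1}`, so `L ≤ I(P_{m-2}) + (x_{m-1})` and hence
`Lᵗ ≤ I(P_{m-2})ᵗ + (x_{m-1})`. The right-hand side is generated by monomials in which `x_m` does
not occur, and colon by `x_m` does not change such a monomial ideal. The reverse inclusion comes
from `I(P_{m-2}) ≤ L`.
-/

open MvPolynomial

open scoped Pointwise

theorem Ideal.sup_pow_le_pow_sup {R : Type*} [CommSemiring R] (I J : Ideal R) (n : ℕ) :
    (I ⊔ J) ^ n ≤ I ^ n ⊔ J := by
  induction n with
  | zero => simp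
  | succ n ih =>
    calc (I ⊔ J) ^ (n + 1) = (I ⊔ J) ^ n * (I ⊔ J) := pow_succ _ _
      _ ≤ (I ^ n ⊔ J) * (I ⊔ J) := Ideal.mul_mono_left ih
      _ ≤ I ^ (n + 1) ⊔ J := by
        rw [Ideal.sup_mul, Ideal.mul_sup, Ideal.mul_sup, ← pow_succ]
        exact sup_le (sup_le le_sup_left (Ideal.mul_le_right.trans le_sup_right))
          (sup_le (Ideal.mul_le_left.trans le_sup_right) (Ideal.mul_le_right.trans le_sup_right))

namespace MvPolynomial

variable {σ R : Type*} [CommSemiring R]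

variable (R) in
def monomialsWithout (v : σ) : Submonoid (MvPolynomial σ R) where
  carrier := {p | ∃ d : σ →₀ ℕ, d v = 0 ∧ monomial d 1 = p}
  one_mem' := ⟨0, rfl, rfl⟩
  mul_mem' := by
    rintro _ _ ⟨a, ha, rfl⟩ ⟨b, hb, rfl⟩
    exact ⟨a + b, by simp [ha, hb], by rw [monomial_mul, one_mul]⟩

theorem X_mem_monomialsWithout {u v : σ} (h : u ≠ v) : X u ∈ monomialsWithout R v :=
  ⟨Finsupp.single u 1, Finsupp.single_eq_of_ne h.symm, rfl⟩

theorem colon_span_X_eq_self {v : σ} {G : Set (MvPolynomial σ R)}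
    (hG : G ⊆ monomialsWithout R v) :
    (Ideal.span G).colon ((Ideal.span {X v} : Ideal (MvPolynomial σ R)) : Set (MvPolynomial σ R)) =
      Ideal.span G := by
  refine le_antisymm (fun f hf => ?_) Ideal.le_colon
  rw [Ideal.mem_colon_span_singleton] at hf
  have hG_eq : G = (monomial · (1 : R)) '' {d | d v = 0 ∧ monomial d 1 ∈ G} := by
    ext p
    refine ⟨fun hp => ?_, ?_⟩
    · obtain ⟨d, hd, rfl⟩ := hG hp
      exact ⟨d, ⟨hd, hp⟩, rfl⟩
    · rintro ⟨d, ⟨-, hd⟩, rfl⟩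
      exact hd
  rw [hG_eq, mem_ideal_span_monomial_image] at hf ⊢
  intro u hu
  obtain ⟨d, hd, hdu⟩ := hf (u + Finsupp.single v 1)
    (by rw [support_mul_X]; exact Finset.mem_map_of_mem _ hu)
  refine ⟨d, hd, fun i => ?_⟩
  by_cases hi : i = v
  · simp [hi, hd.1]
  · simpa [Finsupp.single_eq_of_ne hi] using hdu i

end MvPolynomial

section PathIdeal

variable {R : Type*} [CommSemiring R] {n : ℕ}

variable (R) in
def pathEdges (n m : ℕ) : Set (MvPolynomial (Fin n) R) :=
  {p | ∃ i j : Fin n, (j : ℕ) = (i : ℕ) + 1 ∧ (i : ℕ) + 2 ≤ m ∧ p = X i * X j}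

theorem pathEdges_subset_monomialsWithout {k : ℕ} {v : Fin n} (hk : k ≤ v) :
    pathEdges R n k ⊆ monomialsWithout R v := by
  rintro _ ⟨i, j, hj, hi, rfl⟩
  exact mul_mem (X_mem_monomialsWithout (Fin.ne_of_val_ne (by omega)))
    (X_mem_monomialsWithout (Fin.ne_of_val_ne (by omega)))

variable {K : Type*} [Field K]

theorem pathIdeal_eq_span_pathEdges (m : ℕ) : pathIdeal K n m = Ideal.span (pathEdges K n m) :=
  rfl

theorem pathIdeal_mono {k l : ℕ} (h : k ≤ l) : pathIdeal K n k ≤ pathIdeal K n l :=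
  Ideal.span_mono <| by
    rintro _ ⟨i, j, hj, hi, rfl⟩
    exact ⟨i, j, hj, by omega, rfl⟩

theorem pathIdeal_le_sup_span_X {k : ℕ} (y : Fin n) (hk : k ≤ y + 2) :
    pathIdeal K n k ≤ pathIdeal K n y ⊔ Ideal.span {X y} := by
  refine Ideal.span_le.2 ?_
  rintro _ ⟨i, j, hj, hi, rfl⟩
  by_cases hiy : (i : ℕ) + 2 ≤ y
  · exact Ideal.mem_sup_left (Ideal.subset_span ⟨i, j, hj, hiy, rfl⟩)
  · refine Ideal.mem_sup_right (Ideal.mem_span_singleton.2 ?_)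
    obtain rfl | rfl : j = y ∨ i = y := by omega
    · exact dvd_mul_left _ _
    · exact dvd_mul_right _ _

end PathIdeal

/-- For `m ≥ 4`, `t ≥ 1` and `L = I(P_m)` the edge ideal of the path `P_m` in
`S = K[x_1, …, x_m]`, one has `((Lᵗ : x_m), x_{m-1}) = (I(P_{m-2})ᵗ, x_{m-1})`,
where `I(P_{m-2})` is generated by `x_1 x_2, …, x_{m-3} x_{m-2}` in `S`. -/
theorem pathIdeal_pow_colon_last_var {K : Type*} [Field K] (m t : ℕ) (hm : 4 ≤ m) :
    (((pathIdeal K m m) ^ t).colon ((Ideal.span {X (⟨m - 1, by omega⟩ : Fin m)} : Ideal (MvPolynomial (Fin m) K)) : Set (MvPolynomial (Fin m) K))) ⊔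
        Ideal.span {X (⟨m - 2, by omega⟩ : Fin m)} =
      (pathIdeal K m (m - 2)) ^ t ⊔ Ideal.span {X (⟨m - 2, by omega⟩ : Fin m)} := by
  set z : Fin m := ⟨m - 1, by omega⟩
  set y : Fin m := ⟨m - 2, by omega⟩
  have hRHS : pathIdeal K m (m - 2) ^ t ⊔ Ideal.span {X y} =
      Ideal.span (pathEdges K m (m - 2) ^ t ∪ {X y}) := by
    rw [Ideal.span_union, pathIdeal_eq_span_pathEdges, Ideal.span, Submodule.span_pow]
  have hgens : pathEdges K m (m - 2) ^ t ∪ {X y} ⊆ monomialsWithout K z :=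
    Set.union_subset
      (Submonoid.pow_subset (pathEdges_subset_monomialsWithout (show m - 2 ≤ m - 1 by omega)))
      (Set.singleton_subset_iff.2
        (X_mem_monomialsWithout (Fin.ne_of_val_ne (show m - 2 ≠ m - 1 by omega))))
  have hLt : pathIdeal K m m ^ t ≤ pathIdeal K m (m - 2) ^ t ⊔ Ideal.span {X y} :=
    (Ideal.pow_right_mono (pathIdeal_le_sup_span_X y (show m ≤ m - 2 + 2 by omega)) t).trans
      (Ideal.sup_pow_le_pow_sup _ _ t)
  refine le_antisymm (sup_le ?_ le_sup_right) ?_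
  · calc _ ≤ (pathIdeal K m (m - 2) ^ t ⊔ Ideal.span {X y}).colon _ :=
          Submodule.colon_mono hLt subset_rfl
      _ = _ := by rw [hRHS, colon_span_X_eq_self hgens]
  · exact sup_le_sup_right
      ((Ideal.pow_right_mono (pathIdeal_mono (by omega)) t).trans Ideal.le_colon) _
end

section
/- Let k ≥ 2, n = 3k, and let I = I(P_n) be the edge ideal of the path P_n in S = K[x_1,…,x_n] over a field K. Let P = {a ∈ N^n : x^a ∉ I and x^a divides x_1x_2⋯x_n} be the characteristic poset of S/I, let α = Σ_{i=1}^{k−1} e_{3i−1} ∈ N^n, and let P_{k+1,α} = {a ∈ P : |a| = k+1 and x^α divides x^a}. Then P_{k+1,α} = {α + e_{3k−2} + e_{3k}}; moreover A = Σ_{i=1}^{k} e_{3i−1} belongs to P and |A| = k. -/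
open MvPolynomial

/-!
The points of the characteristic poset are the indicator vectors of the independent sets of
the path. An independent set containing `α = {2, 5, …, 3k - 4}` (1-indexed) contains no
neighbour of these vertices, so on the first `3k - 3` vertices it coincides with `α`. Its two
remaining vertices lie among the last three, `3k - 2, 3k - 1, 3k`, and independence forces them
to be `3k - 2` and `3k`.
-/

theorem Finsupp.single_add_single_le_iff {σ : Type*} {i j : σ} (hij : i ≠ j) {a : σ →₀ ℕ} :
    single i 1 + single j 1 ≤ a ↔ a i ≠ 0 ∧ a j ≠ 0 := by
  classical
  constructor
  · intro h
    have hi := h i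
    have hj := h j
    simp only [add_apply, single_eq_same, ne_eq, hij, hij.symm, not_false_eq_true,
      single_eq_of_ne, add_zero, zero_add] at hi hj
    omega
  · rintro ⟨hi, hj⟩ x
    simp only [add_apply, single_apply]
    split_ifs <;> simp_all <;> omega

theorem monomial_one_dvd_prod_X_iff {σ R : Type*} [Fintype σ] [CommSemiring R] [Nontrivial R]
    (a : σ →₀ ℕ) : monomial a (1 : R) ∣ ∏ i, X i ↔ ∀ j, a j ≤ 1 := by
  simp [X, ← monomial_sum_one, monomial_one_dvd_monomial_one, Finsupp.le_def]

section PathIdeal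

variable {K : Type*} [Field K] {n : ℕ}

def IsPathIndependent (m : ℕ) (a : Fin n →₀ ℕ) : Prop :=
  ∀ i j : Fin n, (j : ℕ) = i + 1 → (i : ℕ) + 2 ≤ m → a i = 0 ∨ a j = 0

theorem pathIdeal_eq_span_monomial (m : ℕ) :
    pathIdeal K n m = Ideal.span ((fun s => monomial s (1 : K)) ''
      {s | ∃ i j : Fin n, (j : ℕ) = i + 1 ∧ (i : ℕ) + 2 ≤ m ∧
        s = Finsupp.single i 1 + Finsupp.single j 1}) := by
  have hX (i j : Fin n) : monomial (Finsupp.single i 1 + Finsupp.single j 1) (1 : K) =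
      X i * X j := by
    rw [X, X, monomial_mul, one_mul]
  rw [pathIdeal]
  congr 1
  ext p
  constructor
  · rintro ⟨i, j, hij, hm, rfl⟩
    exact ⟨_, ⟨i, j, hij, hm, rfl⟩, hX i j⟩
  · rintro ⟨_, ⟨i, j, hij, hm, rfl⟩, rfl⟩
    exact ⟨i, j, hij, hm, hX i j⟩

theorem monomial_one_notMem_pathIdeal_iff (m : ℕ) (a : Fin n →₀ ℕ) :
    monomial a (1 : K) ∉ pathIdeal K n m ↔ IsPathIndependent m a := by
  classical
  rw [pathIdeal_eq_span_monomial, mem_ideal_span_monomial_image, support_monomial,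
    if_neg one_ne_zero]
  simp only [Finset.mem_singleton, forall_eq, Set.mem_ofPred_eq]
  constructor
  · intro h i j hij hm
    by_contra! hne
    exact h ⟨_, ⟨i, j, hij, hm, rfl⟩,
      (Finsupp.single_add_single_le_iff (by rintro rfl; omega)).2 hne⟩
  · rintro h ⟨_, ⟨i, j, hij, hm, rfl⟩, hle⟩
    have hne := (Finsupp.single_add_single_le_iff (by rintro rfl; omega)).1 hle
    exact (h i j hij hm).elim hne.1 hne.2

end PathIdeal

/-- `Σ_{i=1}^m e_{3i-1}` in the 1-indexed notation of the paper. -/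
noncomputable def everyThird (n m : ℕ) (h : 3 * m ≤ n) : Fin n →₀ ℕ :=
  ∑ i : Fin m, Finsupp.single ⟨3 * i + 1, by omega⟩ 1

section EveryThird

variable {n m : ℕ} {h : 3 * m ≤ n}

theorem everyThird_apply (j : Fin n) :
    everyThird n m h j = if (j : ℕ) % 3 = 1 ∧ (j : ℕ) < 3 * m then 1 else 0 := by
  classical
  simp only [everyThird, Finsupp.finsetSum_apply, Finsupp.single_apply, Fin.ext_iff]
  split_ifs with hj
  · rw [Finset.sum_eq_single ⟨(j - 1) / 3, by omega⟩]
    · simp only [if_pos (show 3 * ((j - 1) / 3) + 1 = (j : ℕ) by omega)]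
    · intro i _ hi
      exact if_neg fun e => hi (Fin.ext (by simp only; omega))
    · simp
  · exact Finset.sum_eq_zero fun i _ => if_neg (by omega)

theorem degree_everyThird : (everyThird n m h).degree = m := by
  simp [everyThird, Finsupp.degree_single]

theorem everyThird_le_one (j : Fin n) : everyThird n m h j ≤ 1 := by
  rw [everyThird_apply]
  split_ifs <;> omega

theorem isPathIndependent_everyThird (l : ℕ) : IsPathIndependent l (everyThird n m h) := by
  intro i j hij _
  simp only [everyThird_apply]
  split_ifs <;> omega

theorem apply_eq_everyThird_apply {a : Fin n →₀ ℕ} (ha : IsPathIndependent n a)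
    (ha₁ : ∀ j, a j ≤ 1) (hle : everyThird n m h ≤ a) (j : Fin n) (hj : (j : ℕ) < 3 * m) :
    a j = everyThird n m h j := by
  have hpos (i : Fin n) (hi : (i : ℕ) % 3 = 1 ∧ (i : ℕ) < 3 * m) : a i = 1 := by
    have := hle i
    rw [everyThird_apply, if_pos hi] at this
    exact le_antisymm (ha₁ i) this
  rw [everyThird_apply]
  obtain hj' | hj' | hj' : (j : ℕ) % 3 = 0 ∨ (j : ℕ) % 3 = 1 ∨ (j : ℕ) % 3 = 2 := by omega
  · have hright := ha j ⟨j + 1, by omega⟩ rfl (by omega)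
    rw [hpos ⟨j + 1, by omega⟩ (by simp only; omega)] at hright
    simpa [hj'] using hright
  · simpa [hj', hj] using hpos j ⟨hj', hj⟩
  · have hleft := ha ⟨j - 1, by omega⟩ j (by simp only; omega) (by simp only; omega)
    rw [hpos ⟨j - 1, by omega⟩ (by simp only; omega)] at hleft
    simpa [hj'] using hleft

end EveryThird

section ThreeMul

variable {k n : ℕ}

theorem eq_everyThird_add_single_add_single (hk : 1 ≤ k) (hn : n = 3 * k)
    {a : Fin n →₀ ℕ} (ha : IsPathIndependent n a) (ha₁ : ∀ j, a j ≤ 1)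
    (hle : everyThird n (k - 1) (by omega) ≤ a) (hdeg : a.degree = k + 1) :
    a = everyThird n (k - 1) (by omega) + Finsupp.single ⟨3 * k - 3, by omega⟩ 1 +
      Finsupp.single ⟨3 * k - 1, by omega⟩ 1 := by
  set p : Fin n := ⟨3 * k - 3, by omega⟩
  set q : Fin n := ⟨3 * k - 2, by omega⟩
  set r : Fin n := ⟨3 * k - 1, by omega⟩
  have hdecomp : a = everyThird n (k - 1) (by omega) + Finsupp.single p (a p) +
      Finsupp.single q (a q) + Finsupp.single r (a r) := by
    ext j
    obtain hj | rfl | rfl | rfl : (j : ℕ) < 3 * (k - 1) ∨ j = p ∨ j = q ∨ j = r := by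
      simp only [Fin.ext_iff, p, q, r]
      omega
    · rw [Finsupp.add_apply, Finsupp.add_apply, Finsupp.add_apply,
        apply_eq_everyThird_apply ha ha₁ hle j hj]
      simp only [Finsupp.single_apply, Fin.ext_iff, p, q, r]
      split_ifs <;> omega
    all_goals
      simp only [Finsupp.add_apply, everyThird_apply, Finsupp.single_apply, Fin.ext_iff, p, q, r]
      split_ifs <;> omega
  have hsum : k + 1 = k - 1 + a p + a q + a r := by
    rw [← hdeg, congrArg Finsupp.degree hdecomp]
    simp only [map_add, degree_everyThird, Finsupp.degree_single]
  have hpq := ha p q (by simp only [p, q]; omega) (by simp only [p]; omega)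
  have hqr := ha q r (by simp only [q, r]; omega) (by simp only [q]; omega)
  have hp₁ := ha₁ p
  have hq₁ := ha₁ q
  have hr₁ := ha₁ r
  have hp : a p = 1 := by omega
  have hq : a q = 0 := by omega
  have hr : a r = 1 := by omega
  refine hdecomp.trans ?_
  rw [hp, hq, hr, Finsupp.single_zero, add_zero]

theorem isPathIndependent_everyThird_add_single_add_single (hk : 1 ≤ k) (hn : n = 3 * k) :
    IsPathIndependent n (everyThird n (k - 1) (by omega) +
      Finsupp.single (⟨3 * k - 3, by omega⟩ : Fin n) 1 +
      Finsupp.single (⟨3 * k - 1, by omega⟩ : Fin n) 1) := by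
  intro i j hij _
  simp only [Finsupp.add_apply, everyThird_apply, Finsupp.single_apply, Fin.ext_iff]
  split_ifs <;> omega

theorem everyThird_add_single_add_single_apply_le_one (hk : 1 ≤ k) (hn : n = 3 * k)
    (j : Fin n) :
    (everyThird n (k - 1) (by omega) + Finsupp.single (⟨3 * k - 3, by omega⟩ : Fin n) 1 +
      Finsupp.single (⟨3 * k - 1, by omega⟩ : Fin n) 1 : Fin n →₀ ℕ) j ≤ 1 := by
  simp only [Finsupp.add_apply, everyThird_apply, Finsupp.single_apply, Fin.ext_iff]
  split_ifs <;> omega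

theorem degree_everyThird_add_single_add_single (hk : 1 ≤ k) (hn : n = 3 * k) :
    (everyThird n (k - 1) (by omega) + Finsupp.single (⟨3 * k - 3, by omega⟩ : Fin n) 1 +
      Finsupp.single (⟨3 * k - 1, by omega⟩ : Fin n) 1).degree = k + 1 := by
  simp only [map_add, degree_everyThird, Finsupp.degree_single]
  omega

end ThreeMul

/-- Let `k ≥ 2`, `n = 3k` and `I = I(P_n)` in `S = K[x_1, …, x_n]`. In the
characteristic poset `P = {a ∈ ℕⁿ : x ^ a ∉ I and x ^ a ∣ x_1 ⋯ x_n}` of `S/I`,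
with `α = Σ_{i=1}^{k-1} e_{3i-1}` (written 0-indexed below), one has
`P_{k+1, α} = {α + e_{3k-2} + e_{3k}}`; moreover `A = Σ_{i=1}^{k} e_{3i-1}`
belongs to `P` and `|A| = k`. -/
theorem charPoset_path_three_mul {K : Type*} [Field K] (k n : ℕ) (hk : 2 ≤ k)
    (hn : n = 3 * k) :
    ({a : Fin n →₀ ℕ |
        ((monomial a (1 : K)) ∉ pathIdeal K n n ∧ (monomial a (1 : K)) ∣ ∏ i : Fin n, X i) ∧
        (∑ j : Fin n, a j) = k + 1 ∧
        (monomial (∑ i : Fin (k - 1), Finsupp.single (⟨3 * (i : ℕ) + 1, by omega⟩ : Fin n) 1)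
          (1 : K)) ∣ (monomial a (1 : K))} =
      {(∑ i : Fin (k - 1), Finsupp.single (⟨3 * (i : ℕ) + 1, by omega⟩ : Fin n) 1) +
        Finsupp.single (⟨3 * k - 3, by omega⟩ : Fin n) 1 +
        Finsupp.single (⟨3 * k - 1, by omega⟩ : Fin n) 1}) ∧
    ((monomial (∑ i : Fin k, Finsupp.single (⟨3 * (i : ℕ) + 1, by omega⟩ : Fin n) 1)
        (1 : K)) ∉ pathIdeal K n n ∧
      (monomial (∑ i : Fin k, Finsupp.single (⟨3 * (i : ℕ) + 1, by omega⟩ : Fin n) 1)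
        (1 : K)) ∣ ∏ i : Fin n, X i) ∧
    (∑ j : Fin n, (∑ i : Fin k, Finsupp.single (⟨3 * (i : ℕ) + 1, by omega⟩ : Fin n) 1) j)
      = k := by
  simp only [monomial_one_notMem_pathIdeal_iff, monomial_one_dvd_prod_X_iff,
    monomial_one_dvd_monomial_one, ← Finsupp.degree_eq_sum]
  -- the sums `∑ i, single ⟨3 * i + 1, _⟩ 1` of the statement unfold to `everyThird`
  have h3k : 3 * k ≤ n := hn.ge
  refine ⟨Set.ext fun a => ⟨?_, ?_⟩,
    ⟨isPathIndependent_everyThird (h := h3k) n, everyThird_le_one (h := h3k)⟩,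
    degree_everyThird (h := h3k)⟩
  · rintro ⟨⟨ha, ha₁⟩, hdeg, hle⟩
    exact eq_everyThird_add_single_add_single (by omega) hn ha ha₁ hle hdeg
  · rintro rfl
    exact ⟨⟨isPathIndependent_everyThird_add_single_add_single (by omega) hn,
      everyThird_add_single_add_single_apply_le_one (by omega) hn⟩,
      degree_everyThird_add_single_add_single (by omega) hn, le_add_right (le_add_right le_rfl)⟩
end
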